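/- arXiv:1904.08846 — 2 statements merged into one kernel-verified Lean document; each statement's English description precedes it below -/
import Mathlib

section
/- Let x : Fin (n·l) → ℝ with congruence derivative sequence y_t = ∑_{j=0}^{n-1} x_{j·l+t}, and let z_q = ∑_{t=0}^{l-1} y_t · y_{(t+q) mod l} be its cyclic autocorrelation with l odd. Then the Fourier power spectrum of x at frequency n (i.e., at integer period l), |X(n)|² = |∑_{r=0}^{nl-1} x_r · exp(-2πi·r·n/(n·l))|², equals z_0 + 2·∑_{q=1}^{⌊l/2⌋} z_q · cos(2πq/l). -/
/-!
At frequency `n` the kernel `exp (-2πi r n / (n l)) = exp (-2πi r / l)` only depends on `r mod l`,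
so the DFT coefficient collapses to `∑ₜ yₜ ω⁻ᵗ` with `ω = exp (2πi / l)`, a character sum on
`ℤ/lℤ`. Multiplying such a sum by its conjugate and substituting `s = t + q` gives
`∑_q z_q ω^q` (the cyclic Wiener–Khinchin identity); its real part is `∑_q z_q cos (2πq/l)`.
Finally `z_{l-q} = z_q` and `cos (2π(l-q)/l) = cos (2πq/l)`, and since `l` is odd the terms
`q` and `l - q` pair up for `1 ≤ q ≤ l / 2`, leaving only `q = 0` unpaired.
-/

open Finset Complex ComplexConjugate
open scoped Real

lemma Finset.sum_range_odd_eq_add_two_nsmul {M : Type*} [AddCommMonoid M] {l : ℕ} (hl : Odd l)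
    (g : ℕ → M) (hg : ∀ q ∈ Icc 1 (l / 2), g (l - q) = g q) :
    ∑ q ∈ range l, g q = g 0 + 2 • ∑ q ∈ Icc 1 (l / 2), g q := by
  obtain ⟨m, rfl⟩ := hl
  have hm : (2 * m + 1) / 2 = m := by omega
  rw [hm] at hg ⊢
  have hIcc : ∑ q ∈ Icc 1 m, g q = ∑ k ∈ range m, g (k + 1) := by
    rw [← Finset.Ico_add_one_right_eq_Icc, sum_Ico_eq_sum_range]
    simp only [add_comm 1, Nat.add_sub_cancel]
  have hreflect : ∑ k ∈ range m, g (m + k + 1) = ∑ k ∈ range m, g (k + 1) := by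
    rw [← sum_range_reflect]
    refine sum_congr rfl fun k hk => ?_
    have hk : k < m := mem_range.1 hk
    rw [← hg (k + 1) (mem_Icc.2 ⟨by omega, by omega⟩)]
    congr 1
    omega
  rw [sum_range_succ', two_mul, sum_range_add, hreflect, hIcc, two_nsmul, add_comm]

lemma Real.cos_two_pi_mul_sub_div {l : ℝ} (hl : l ≠ 0) (q : ℝ) :
    Real.cos (2 * π * (l - q) / l) = Real.cos (2 * π * q / l) := by
  rw [show 2 * π * (l - q) / l = 2 * π - 2 * π * q / l by field_simp, Real.cos_two_pi_sub]

section Autocorrelation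

variable {G : Type*} [AddCommGroup G] [Fintype G]

def autocorrelation (y : G → ℝ) (q : G) : ℝ := ∑ t, y t * y (t + q)

lemma autocorrelation_neg (y : G → ℝ) (q : G) : autocorrelation y (-q) = autocorrelation y q := by
  unfold autocorrelation
  rw [← Equiv.sum_comp (Equiv.addRight q)]
  simp only [Equiv.coe_addRight, add_neg_cancel_right, mul_comm]

lemma sum_mul_addChar_neg_mul_conj (ψ : AddChar G ℂ) (y : G → ℝ) :
    (∑ t, (y t : ℂ) * ψ (-t)) * conj (∑ t, (y t : ℂ) * ψ (-t)) =
      ∑ q, (autocorrelation y q : ℂ) * ψ q := by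
  have hconj : conj (∑ t, (y t : ℂ) * ψ (-t)) = ∑ s, (y s : ℂ) * ψ s := by
    simp only [map_sum, map_mul, conj_ofReal, AddChar.map_neg_eq_conj, conj_conj]
  calc (∑ t, (y t : ℂ) * ψ (-t)) * conj (∑ t, (y t : ℂ) * ψ (-t))
      = ∑ t, ∑ q, (y t : ℂ) * ψ (-t) * ((y (t + q) : ℂ) * ψ (t + q)) := by
        rw [hconj, sum_mul_sum]
        exact sum_congr rfl fun t _ => (Equiv.sum_comp (Equiv.addLeft t) _).symm
    _ = ∑ q, ∑ t, (y t : ℂ) * y (t + q) * ψ q := by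
        rw [sum_comm]
        refine sum_congr rfl fun q _ => sum_congr rfl fun t _ => ?_
        rw [mul_mul_mul_comm, ← AddChar.map_add_eq_mul, neg_add_cancel_left, mul_assoc]
    _ = ∑ q, (autocorrelation y q : ℂ) * ψ q := by
        simp only [autocorrelation, ofReal_sum, ofReal_mul, sum_mul]

lemma sq_norm_sum_mul_addChar_neg (ψ : AddChar G ℂ) (y : G → ℝ) :
    ‖∑ t, (y t : ℂ) * ψ (-t)‖ ^ 2 = ∑ q, autocorrelation y q * (ψ q).re := by
  rw [Complex.sq_norm, ← ofReal_re (normSq _), ← mul_conj, sum_mul_addChar_neg_mul_conj, re_sum]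
  simp only [re_ofReal_mul]

end Autocorrelation

noncomputable def Fin.stdAddChar (l : ℕ) [NeZero l] : AddChar (Fin l) ℂ where
  toFun t := ZMod.stdAddChar (t.val : ZMod l)
  map_zero_eq_one' := by simp
  map_add_eq_mul' s t := by rw [Fin.val_add, ZMod.natCast_mod, Nat.cast_add, AddChar.map_add_eq_mul]

lemma Fin.stdAddChar_apply {l : ℕ} [NeZero l] (t : Fin l) :
    Fin.stdAddChar l t = exp (2 * π * I * t / l) :=
  ZMod.toCircle_natCast t

lemma Fin.stdAddChar_neg {l : ℕ} [NeZero l] (t : Fin l) :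
    Fin.stdAddChar l (-t) = exp (-(2 * π * I * t / l)) := by
  rw [AddChar.map_neg_eq_inv, Fin.stdAddChar_apply, exp_neg]

lemma Fin.stdAddChar_re {l : ℕ} [NeZero l] (t : Fin l) :
    (Fin.stdAddChar l t).re = Real.cos (2 * π * t / l) := by
  rw [Fin.stdAddChar_apply, ← exp_ofReal_mul_I_re]
  push_cast
  ring_nf

/-- The congruence derivative sequence: `finProdFinEquiv (j, t)` is the index `j * l + t`. -/
def congruenceSum {R : Type*} [AddCommMonoid R] {n l : ℕ} (x : Fin (n * l) → R) (t : Fin l) : R :=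
  ∑ j : Fin n, x (finProdFinEquiv (j, t))

lemma sum_mul_exp_eq_sum_congruenceSum_mul_stdAddChar {n l : ℕ} [NeZero n] [NeZero l]
    (x : Fin (n * l) → ℂ) :
    ∑ r, x r * exp (-2 * π * I * r.1 * n / (n * l)) =
      ∑ t, congruenceSum x t * Fin.stdAddChar l (-t) := by
  rw [← Equiv.sum_comp finProdFinEquiv, Fintype.sum_prod_type_right]
  refine sum_congr rfl fun t _ => ?_
  rw [congruenceSum, sum_mul]
  refine sum_congr rfl fun j _ => ?_
  have hexponent : -2 * π * I * ((finProdFinEquiv (j, t)).1 : ℂ) * n / (n * l) =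
      -(2 * π * I * t / l) + ((-j : ℤ) : ℂ) * (2 * π * I) := by
    rw [finProdFinEquiv_apply_val]
    push_cast
    field_simp [NeZero.ne (n : ℂ), NeZero.ne (l : ℂ)]
    ring
  rw [hexponent, exp_add, exp_int_mul_two_pi_mul_I, mul_one, Fin.stdAddChar_neg]

/-- The power spectrum of `x` at integer period `l` (frequency `n`) equals the
autocorrelation expansion of its congruence derivative sequence, for odd `l`. -/
theorem fps_integer_period (n l : ℕ) (hn : 0 < n) (hl : 0 < l) (hodd : Odd l)
    (x : Fin (n * l) → ℝ) (y : Fin l → ℝ)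
    (hy : ∀ t : Fin l, y t = ∑ j : Fin n,
      x ⟨j.1 * l + t.1, by have hj := j.2; have ht := t.2; calc
        j.1 * l + t.1 < j.1 * l + l := by omega
        _ = (j.1 + 1) * l := by ring
        _ ≤ n * l := Nat.mul_le_mul_right l (by omega)⟩)
    (z : ℕ → ℝ)
    (hz : ∀ q : ℕ, z q = ∑ t : Fin l, y t * y ⟨(t.1 + q) % l, Nat.mod_lt _ hl⟩) :
    ‖∑ r : Fin (n * l), (x r : ℂ) *
        Complex.exp (-2 * Real.pi * Complex.I * r.1 * n / (n * l))‖ ^ 2 =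
      z 0 + 2 * ∑ q ∈ Finset.Icc 1 (l / 2), z q * Real.cos (2 * Real.pi * q / l) := by
  have : NeZero n := ⟨hn.ne'⟩
  have : NeZero l := ⟨hl.ne'⟩
  have hy' : congruenceSum (fun r => (x r : ℂ)) = fun t => (y t : ℂ) := by
    funext t
    rw [hy, congruenceSum]
    push_cast
    refine sum_congr rfl fun j _ => ?_
    congr 2
    ext
    rw [finProdFinEquiv_apply_val, add_comm, mul_comm]
  have hz' : ∀ q : Fin l, z q = autocorrelation y q := fun q => by rw [hz]; rfl
  have hsymm : ∀ q ∈ Icc 1 (l / 2),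
      z (l - q) * Real.cos (2 * π * (l - q : ℕ) / l) = z q * Real.cos (2 * π * q / l) := by
    intro q hq
    obtain ⟨hq1, hql⟩ : 1 ≤ q ∧ q < l := by simp only [mem_Icc] at hq; omega
    have hneg : ((-⟨q, hql⟩ : Fin l) : ℕ) = l - q := by
      rw [Fin.val_neg', Fin.val_mk, Nat.mod_eq_of_lt (by omega)]
    rw [← hneg, hz', hz' ⟨q, hql⟩, autocorrelation_neg, hneg, Nat.cast_sub hql.le,
      Real.cos_two_pi_mul_sub_div (by positivity)]
  rw [sum_mul_exp_eq_sum_congruenceSum_mul_stdAddChar, hy', sq_norm_sum_mul_addChar_neg]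
  calc ∑ q, autocorrelation y q * (Fin.stdAddChar l q).re
      = ∑ q ∈ range l, z q * Real.cos (2 * π * q / l) := by
        rw [← Fin.sum_univ_eq_sum_range]
        simp only [hz', Fin.stdAddChar_re]
    _ = _ := by
        rw [sum_range_odd_eq_add_two_nsmul hodd _ hsymm]
        simp only [nsmul_eq_mul, Nat.cast_ofNat, CharP.cast_eq_zero, mul_zero, zero_div,
          Real.cos_zero, mul_one]
end

section
/- Let l be even and y : Fin l → ℝ. Then the power spectrum at the Nyquist frequency k = l/2 satisfies FPS(l/2) = (∑_{t=0}^{l-1} (-1)^t · y_t)², which using the paper's notation equals z_0 + 2·∑_{q=1}^{l/2-1} (-1)^q · z_q + 2·(-1)^{l/2}·w, where z_q is the cyclic autocorrelation and w = ∑_{t=0}^{l/2-1} y_t · y_{t+l/2}. -/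
/-!
At `k = l/2` the Fourier kernel is `(-1)^t`, so the Nyquist power is the square of the
alternating sum. Expanding the square and substituting `u = t + q` cyclically, the signs
`(-1)^t (-1)^(t+q) = (-1)^q` turn it into `∑_{q<l} (-1)^q z_q`. Since `z_(l-q) = z_q` and, `l` being
even, `(-1)^(l-q) = (-1)^q`, the lags `q` and `l - q` pair up; the unpaired lag `l/2` contributes
`z_(l/2) = 2 w`.
-/

open Finset Function

theorem Function.Periodic.sum_range_comp_add {M : Type*} [AddCommMonoid M] {g : ℕ → M} {l : ℕ}
    (hg : Periodic g l) (q : ℕ) : ∑ n ∈ range l, g (n + q) = ∑ n ∈ range l, g n := by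
  induction q with
  | zero => rfl
  | succ q ih =>
    rcases l with _ | k
    · rfl
    · have hwrap : g (k + (q + 1)) = g (0 + q) := by
        rw [zero_add, ← hg q]; ring_nf
      rw [← ih, sum_range_succ, sum_range_succ' (fun n => g (n + q)), hwrap]
      simp only [add_right_comm _ 1 q, add_assoc]

section Autocorrelation

variable {R : Type*} [CommSemiring R]

def cyclicAutocorr (l : ℕ) (Y : ℕ → R) (q : ℕ) : R := ∑ n ∈ range l, Y n * Y (n + q)

theorem sq_sum_range_mul_eq_sum_cyclicAutocorr {l : ℕ} {s Y : ℕ → R} (hs : Periodic s l)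
    (hY : Periodic Y l) (hs_add : ∀ a b, s (a + b) = s a * s b) (hs_sq : ∀ a, s a * s a = 1) :
    (∑ n ∈ range l, s n * Y n) ^ 2 = ∑ q ∈ range l, s q * cyclicAutocorr l Y q := by
  have hsY : Periodic (fun n => s n * Y n) l := fun n => by simp only [hs n, hY n]
  calc (∑ n ∈ range l, s n * Y n) ^ 2
      = ∑ n ∈ range l, s n * Y n * ∑ q ∈ range l, s (n + q) * Y (n + q) := by
        rw [sq, sum_mul]
        refine sum_congr rfl fun n _ => congrArg _ ?_
        rw [← hsY.sum_range_comp_add n]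
        simp only [add_comm]
    _ = ∑ n ∈ range l, ∑ q ∈ range l, s q * (Y n * Y (n + q)) := by
        refine sum_congr rfl fun n _ => ?_
        rw [mul_sum]
        refine sum_congr rfl fun q _ => ?_
        rw [hs_add, show s n * Y n * (s n * s q * Y (n + q))
          = s n * s n * (s q * (Y n * Y (n + q))) by ring, hs_sq, one_mul]
    _ = ∑ q ∈ range l, s q * cyclicAutocorr l Y q := by
        rw [sum_comm]
        simp only [cyclicAutocorr, mul_sum]

theorem cyclicAutocorr_sub {l : ℕ} {Y : ℕ → R} (hY : Periodic Y l) {q : ℕ} (hq : q ≤ l) :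
    cyclicAutocorr l Y (l - q) = cyclicAutocorr l Y q := by
  have hper : Periodic (fun n => Y n * Y (n + (l - q))) l := fun n => by
    simp only [add_right_comm n l, hY _]
  rw [cyclicAutocorr, ← hper.sum_range_comp_add q, cyclicAutocorr]
  refine sum_congr rfl fun n _ => ?_
  rw [add_assoc, Nat.add_sub_cancel' hq, hY, mul_comm]

theorem cyclicAutocorr_half {l : ℕ} (heven : Even l) {Y : ℕ → R} (hY : Periodic Y l) :
    cyclicAutocorr l Y (l / 2) = 2 * ∑ n ∈ range (l / 2), Y n * Y (n + l / 2) := by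
  obtain ⟨m, rfl⟩ := heven
  rw [show (m + m) / 2 = m by omega, cyclicAutocorr, sum_range_add, two_mul]
  congr 1
  refine sum_congr rfl fun n _ => ?_
  rw [mul_comm, add_comm m n, add_assoc, hY]

end Autocorrelation

theorem sum_range_eq_of_even_of_symm {M : Type*} [AddCommMonoid M] {l : ℕ} (hl : 0 < l)
    (heven : Even l) (f : ℕ → M) (hf : ∀ q, 0 < q → q < l / 2 → f (l - q) = f q) :
    ∑ q ∈ range l, f q = f 0 + 2 • ∑ q ∈ Icc 1 (l / 2 - 1), f q + f (l / 2) := by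
  obtain ⟨k, hk⟩ : ∃ k, l = (k + 1) + (k + 1) := by obtain ⟨m, rfl⟩ := heven; exact ⟨m - 1, by omega⟩
  subst hk
  have hIcc : ∑ q ∈ Icc 1 k, f q = ∑ i ∈ range k, f (i + 1) := by
    rw [← Ico_add_one_right_eq_Icc, sum_Ico_eq_sum_range]
    simp [add_comm]
  have hreflect : ∑ i ∈ range k, f (k + 1 + (i + 1)) = ∑ i ∈ range k, f (i + 1) := by
    rw [← sum_range_reflect]
    refine sum_congr rfl fun i hi => ?_
    rw [mem_range] at hi
    rw [← hf (i + 1) (by omega) (by omega)]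
    congr 1; omega
  rw [show (k + 1 + (k + 1)) / 2 = k + 1 by omega, sum_range_add, sum_range_succ', sum_range_succ',
    add_tsub_cancel_right, hIcc, hreflect, two_nsmul]
  simp only [add_zero]
  abel

theorem neg_one_pow_sub_of_even {R : Type*} [Ring R] {l q : ℕ}
    (heven : Even l) (hq : q ≤ l) : (-1 : R) ^ (l - q) = (-1) ^ q := by
  obtain ⟨m, rfl⟩ := heven
  rw [neg_one_pow_eq_pow_mod_two, neg_one_pow_eq_pow_mod_two (n := q)]
  congr 1
  omega

theorem Complex.exp_nyquist {l : ℕ} (hl : l ≠ 0) (heven : Even l) (t : ℕ) :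
    Complex.exp (-2 * Real.pi * Complex.I * t * (l / 2 : ℕ) / l) = (-1) ^ t := by
  obtain ⟨m, rfl⟩ := heven
  have hm : (m : ℂ) ≠ 0 := Nat.cast_ne_zero.mpr (by omega)
  have harg : -2 * Real.pi * Complex.I * t * ((m + m) / 2 : ℕ) / ((m + m : ℕ) : ℂ)
      = t * -(Real.pi * Complex.I) := by
    rw [show (m + m) / 2 = m by omega]
    push_cast
    field_simp
    ring
  rw [harg, Complex.exp_nat_mul, Complex.exp_neg, Complex.exp_pi_mul_I, inv_neg, inv_one]

theorem norm_sq_dft_nyquist {l : ℕ} (hl : l ≠ 0) (heven : Even l) (y : Fin l → ℝ) :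
    ‖∑ t : Fin l, (y t : ℂ) *
        Complex.exp (-2 * Real.pi * Complex.I * t.1 * (l / 2 : ℕ) / l)‖ ^ 2 =
      (∑ t : Fin l, (-1 : ℝ) ^ t.1 * y t) ^ 2 := by
  have hdft : ∑ t : Fin l, (y t : ℂ) *
      Complex.exp (-2 * Real.pi * Complex.I * t.1 * (l / 2 : ℕ) / l)
      = ((∑ t : Fin l, (-1 : ℝ) ^ t.1 * y t : ℝ) : ℂ) := by
    push_cast
    exact sum_congr rfl fun t _ => by rw [Complex.exp_nyquist hl heven]; ring
  rw [hdft, Complex.norm_real, Real.norm_eq_abs, sq_abs]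

section PeriodicExt

variable {α : Type*} {l : ℕ} (hl : 0 < l) (y : Fin l → α)

/-- The `l`-periodic extension to `ℕ`, turning cyclic shifts of indices into plain addition. -/
def periodicExt (n : ℕ) : α :=
  y ⟨n % l, Nat.mod_lt _ hl⟩

theorem periodic_periodicExt : Periodic (periodicExt hl y) l := fun n => by
  simp only [periodicExt, Nat.add_mod_right]

theorem periodicExt_of_lt {n : ℕ} (hn : n < l) : periodicExt hl y n = y ⟨n, hn⟩ := by
  simp only [periodicExt, Nat.mod_eq_of_lt hn]

theorem sum_fin_eq_sum_range_periodicExt {M : Type*} [AddCommMonoid M] (G : ℕ → α → M) :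
    ∑ t : Fin l, G t (y t) = ∑ n ∈ range l, G n (periodicExt hl y n) := by
  rw [← Fin.sum_univ_eq_sum_range]
  simp only [periodicExt_of_lt hl y, Fin.is_lt]

end PeriodicExt

/-- At the Nyquist frequency `k = l/2` (for even `l`), the power spectrum equals
`(∑ (-1)^t y_t)²`, which equals `z₀ + 2 ∑_{q=1}^{l/2-1} (-1)^q z_q + 2 (-1)^{l/2} w`. -/
theorem fps_nyquist (l : ℕ) (hl : 0 < l) (heven : Even l) (y : Fin l → ℝ)
    (z : ℕ → ℝ)
    (hz : ∀ q : ℕ, z q = ∑ t : Fin l, y t * y ⟨(t.1 + q) % l, Nat.mod_lt _ hl⟩)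
    (w : ℝ)
    (hw : w = ∑ t : Fin (l / 2), y ⟨t.1, by omega⟩ * y ⟨t.1 + l / 2, by omega⟩) :
    ‖∑ t : Fin l, (y t : ℂ) *
        Complex.exp (-2 * Real.pi * Complex.I * t.1 * (l / 2 : ℕ) / l)‖ ^ 2 =
      (∑ t : Fin l, (-1 : ℝ) ^ t.1 * y t) ^ 2
    ∧ (∑ t : Fin l, (-1 : ℝ) ^ t.1 * y t) ^ 2 =
      z 0 + 2 * ∑ q ∈ Finset.Icc 1 (l / 2 - 1), (-1 : ℝ) ^ q * z q
        + 2 * (-1 : ℝ) ^ (l / 2) * w := by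
  refine ⟨norm_sq_dft_nyquist hl.ne' heven y, ?_⟩
  set Y := periodicExt hl y
  have hY : Periodic Y l := periodic_periodicExt hl y
  have hz' (q : ℕ) : z q = cyclicAutocorr l Y q :=
    (hz q).trans (sum_fin_eq_sum_range_periodicExt hl y fun n a => a * Y (n + q))
  have hw' : w = ∑ n ∈ range (l / 2), Y n * Y (n + l / 2) := by
    rw [hw, ← Fin.sum_univ_eq_sum_range (fun n => Y n * Y (n + l / 2))]
    refine sum_congr rfl fun t _ => ?_
    rw [← periodicExt_of_lt hl y, ← periodicExt_of_lt hl y]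
  have hs : Periodic (fun n => (-1 : ℝ) ^ n) l := fun n => by
    simp only [pow_add, heven.neg_one_pow, mul_one]
  rw [sum_fin_eq_sum_range_periodicExt hl y fun n a => (-1) ^ n * a,
    sq_sum_range_mul_eq_sum_cyclicAutocorr hs hY (fun a b => pow_add _ _ _)
      (fun a => by rw [← mul_pow]; norm_num),
    sum_range_eq_of_even_of_symm hl heven _ fun q _ hq => by
      rw [neg_one_pow_sub_of_even heven (by omega), cyclicAutocorr_sub hY (by omega)],
    cyclicAutocorr_half heven hY, ← hw']
  simp only [hz', pow_zero, one_mul, nsmul_eq_mul, Nat.cast_ofNat]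
  ring
end
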